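/- arXiv:2605.26191 — 3 statements merged into one kernel-verified Lean document; each statement's English description precedes it below -/
import Mathlib

section
/- State-space isomorphism of minimal realizations: Let (A1, B1, C1) and (A2, B2, C2) be delay-free linear systems with the same state dimension n, input dimension m, and output dimension p. Assume both realizations are minimal, i.e., for i = 1, 2 the controllability matrix [B_i, A_i B_i, …, A_i^{n−1} B_i] has rank n and the observability matrix stacking C_i, C_i A_i, …, C_i A_i^{n−1} has rank n. If C1 A1^{j−1} B1 = C2 A2^{j−1} B2 for all j ≥ 1, then there exists an invertible matrix T ∈ ℝ^{n×n} with A2 = T A1 T⁻¹, B2 = T B1, and C2 = C1 T⁻¹. -/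
/-- The controllability matrix `[B, AB, …, A^(n-1)B]` of a delay-free system, as an
`n × (n·m)` matrix indexed by block. -/
def controllabilityMatrix (n m : ℕ) (A : Matrix (Fin n) (Fin n) ℝ)
    (B : Matrix (Fin n) (Fin m) ℝ) : Matrix (Fin n) (Fin n × Fin m) ℝ :=
  fun i q => (A ^ (q.1 : ℕ) * B) i q.2

/-- The observability matrix stacking `C, CA, …, CA^(n-1)`, as a `(p·n) × n` matrix
indexed by block. -/
def observabilityMatrix (n p : ℕ) (A : Matrix (Fin n) (Fin n) ℝ)
    (C : Matrix (Fin p) (Fin n) ℝ) : Matrix (Fin n × Fin p) (Fin n) ℝ :=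
  fun q j => (C * A ^ (q.1 : ℕ)) q.2 j

/-- A matrix with full column rank has a left inverse. -/
lemma exists_left_inverse_of_rank {ι : Type*} [Fintype ι] [DecidableEq ι] {n : ℕ}
    (M : Matrix ι (Fin n) ℝ) (h : M.rank = n) :
    ∃ L : Matrix (Fin n) ι ℝ, L * M = 1 := by
  have hker : LinearMap.ker M.mulVecLin = ⊥ := by
    have h1 := LinearMap.finrank_range_add_finrank_ker M.mulVecLin
    rw [show Module.finrank ℝ (LinearMap.range M.mulVecLin) = n from h] at h1
    rw [show Module.finrank ℝ (Fin n → ℝ) = n by simp] at h1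
    exact Submodule.finrank_eq_zero.mp (by omega)
  obtain ⟨g, hg⟩ := (Matrix.toLin' M).exists_leftInverse_of_injective
    (by rw [Matrix.toLin'_apply']; exact hker)
  refine ⟨LinearMap.toMatrix' g, ?_⟩
  rw [← LinearMap.toMatrix'_toLin' M, ← LinearMap.toMatrix'_comp, hg, LinearMap.toMatrix'_id]

/-- A matrix with full row rank has a right inverse. -/
lemma exists_right_inverse_of_rank {ι : Type*} [Fintype ι] [DecidableEq ι] {n : ℕ}
    (M : Matrix (Fin n) ι ℝ) (h : M.rank = n) :
    ∃ R : Matrix ι (Fin n) ℝ, M * R = 1 := by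
  have hr : LinearMap.range M.mulVecLin = ⊤ :=
    Submodule.eq_top_of_finrank_eq (by rw [show Module.finrank ℝ
      (LinearMap.range M.mulVecLin) = n from h]; simp)
  obtain ⟨g, hg⟩ := (Matrix.toLin' M).exists_rightInverse_of_surjective
    (by rw [Matrix.toLin'_apply']; exact hr)
  refine ⟨LinearMap.toMatrix' g, ?_⟩
  rw [← LinearMap.toMatrix'_toLin' M, ← LinearMap.toMatrix'_comp, hg, LinearMap.toMatrix'_id]

lemma obs_mul {n p : ℕ} (A : Matrix (Fin n) (Fin n) ℝ) (C : Matrix (Fin p) (Fin n) ℝ)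
    {ι : Type*} [Fintype ι] (Y : Matrix (Fin n) ι ℝ) (q1 : Fin n) (r : Fin p) (j : ι) :
    (observabilityMatrix n p A C * Y) (q1, r) j = (C * A ^ (q1 : ℕ) * Y) r j := by
  simp [Matrix.mul_apply, observabilityMatrix]

lemma mul_ctrb {n m : ℕ} (A : Matrix (Fin n) (Fin n) ℝ) (B : Matrix (Fin n) (Fin m) ℝ)
    {ι : Type*} [Fintype ι] (Y : Matrix ι (Fin n) ℝ) (i : ι) (q2 : Fin n) (s : Fin m) :
    (Y * controllabilityMatrix n m A B) i (q2, s) = (Y * (A ^ (q2 : ℕ) * B)) i s := by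
  simp [Matrix.mul_apply, controllabilityMatrix]

lemma obs_mul_ctrb {n m p : ℕ} (A : Matrix (Fin n) (Fin n) ℝ) (B : Matrix (Fin n) (Fin m) ℝ)
    (C : Matrix (Fin p) (Fin n) ℝ) (X : Matrix (Fin n) (Fin n) ℝ) (q1 : Fin n) (r : Fin p)
    (q2 : Fin n) (s : Fin m) :
    (observabilityMatrix n p A C * X * controllabilityMatrix n m A B) (q1, r) (q2, s)
      = (C * A ^ (q1 : ℕ) * (X * (A ^ (q2 : ℕ) * B))) r s := by
  rw [mul_ctrb A B (observabilityMatrix n p A C * X), Matrix.mul_assoc, obs_mul]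

/-- State-space isomorphism of minimal realizations: two minimal delay-free realizations
of the same state dimension with equal Markov parameters are related by a similarity
transformation. -/
theorem minimal_realizations_similar
    (n m p : ℕ)
    (A1 A2 : Matrix (Fin n) (Fin n) ℝ)
    (B1 B2 : Matrix (Fin n) (Fin m) ℝ)
    (C1 C2 : Matrix (Fin p) (Fin n) ℝ)
    (hctrb1 : (controllabilityMatrix n m A1 B1).rank = n)
    (hobsv1 : (observabilityMatrix n p A1 C1).rank = n)
    (hctrb2 : (controllabilityMatrix n m A2 B2).rank = n)
    (hobsv2 : (observabilityMatrix n p A2 C2).rank = n)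
    (hmarkov : ∀ j : ℕ, 1 ≤ j → C1 * A1 ^ (j - 1) * B1 = C2 * A2 ^ (j - 1) * B2) :
    ∃ T : Matrix (Fin n) (Fin n) ℝ,
      IsUnit T ∧ A2 = T * A1 * T⁻¹ ∧ B2 = T * B1 ∧ C2 = C1 * T⁻¹ := by
  rcases Nat.eq_zero_or_pos n with hn | hn
  · subst hn
    refine ⟨1, isUnit_one, Subsingleton.elim _ _, ?_, ?_⟩
    · ext i; exact absurd i.2 (by omega)
    · ext r j; exact absurd j.2 (by omega)
  set O1 := observabilityMatrix n p A1 C1 with hO1def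
  set O2 := observabilityMatrix n p A2 C2 with hO2def
  set K1 := controllabilityMatrix n m A1 B1 with hK1def
  set K2 := controllabilityMatrix n m A2 B2 with hK2def
  obtain ⟨L, hL⟩ := exists_left_inverse_of_rank _ hobsv2
  obtain ⟨R, hR⟩ := exists_right_inverse_of_rank _ hctrb2
  have H : ∀ X1 X2 : Matrix (Fin n) (Fin n) ℝ,
      (∀ q1 q2 : Fin n, C1 * A1 ^ (q1 : ℕ) * (X1 * (A1 ^ (q2 : ℕ) * B1))
        = C2 * A2 ^ (q1 : ℕ) * (X2 * (A2 ^ (q2 : ℕ) * B2))) →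
      O1 * X1 * K1 = O2 * X2 * K2 := by
    intro X1 X2 hX
    ext ⟨q1, r⟩ ⟨q2, s⟩
    rw [hO1def, hK1def, hO2def, hK2def, obs_mul_ctrb, obs_mul_ctrb, hX]
  have hmk : ∀ d : ℕ, C1 * A1 ^ d * B1 = C2 * A2 ^ d * B2 := by
    intro d
    have := hmarkov (d + 1) (by omega)
    simpa using this
  have hOK : O1 * K1 = O2 * K2 := by
    have h := H 1 1 (fun q1 q2 => by
      rw [Matrix.one_mul, Matrix.one_mul, ← Matrix.mul_assoc, ← Matrix.mul_assoc,
        Matrix.mul_assoc C1, Matrix.mul_assoc C2, ← pow_add, ← pow_add]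
      exact hmk _)
    rwa [Matrix.mul_one, Matrix.mul_one] at h
  have hOAK : O1 * A1 * K1 = O2 * A2 * K2 := by
    refine H A1 A2 (fun q1 q2 => ?_)
    calc C1 * A1 ^ (q1 : ℕ) * (A1 * (A1 ^ (q2 : ℕ) * B1))
        = C1 * A1 ^ ((q1 : ℕ) + (1 + (q2 : ℕ))) * B1 := by
          simp only [pow_add, pow_one, Matrix.mul_assoc]
      _ = C2 * A2 ^ ((q1 : ℕ) + (1 + (q2 : ℕ))) * B2 := hmk _
      _ = C2 * A2 ^ (q1 : ℕ) * (A2 * (A2 ^ (q2 : ℕ) * B2)) := by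
          simp only [pow_add, pow_one, Matrix.mul_assoc]
  set T := L * O1 with hTdef
  set S := K1 * R with hSdef
  have hTS : T * S = 1 := by
    calc T * S = L * (O1 * K1) * R := by simp only [hTdef, hSdef, Matrix.mul_assoc]
      _ = L * (O2 * K2) * R := by rw [hOK]
      _ = (L * O2) * (K2 * R) := by simp only [Matrix.mul_assoc]
      _ = 1 := by rw [hL, hR, Matrix.one_mul]
  have hST : S * T = 1 := mul_eq_one_comm.mp hTS
  have hTinv : T⁻¹ = S := Matrix.inv_eq_right_inv hTS
  have hUnit : IsUnit T := ⟨⟨T, S, hTS, hST⟩, rfl⟩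
  have hTK : T * K1 = K2 := by
    calc T * K1 = L * (O1 * K1) := by simp only [hTdef, Matrix.mul_assoc]
      _ = L * (O2 * K2) := by rw [hOK]
      _ = (L * O2) * K2 := by simp only [Matrix.mul_assoc]
      _ = K2 := by rw [hL, Matrix.one_mul]
  have hOS : O1 * S = O2 := by
    calc O1 * S = (O1 * K1) * R := by simp only [hSdef, Matrix.mul_assoc]
      _ = (O2 * K2) * R := by rw [hOK]
      _ = O2 * (K2 * R) := by simp only [Matrix.mul_assoc]
      _ = O2 := by rw [hR, Matrix.mul_one]
  have hz : ((⟨0, hn⟩ : Fin n) : ℕ) = 0 := rfl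
  have hB : B2 = T * B1 := by
    ext i s
    have h1 := congrFun (congrFun hTK i) (⟨0, hn⟩, s)
    rw [hK1def, hK2def, mul_ctrb] at h1
    simp only [controllabilityMatrix, hz, pow_zero, Matrix.one_mul] at h1
    exact h1.symm
  have hC : C2 = C1 * S := by
    ext r j
    have h1 := congrFun (congrFun hOS (⟨0, hn⟩, r)) j
    rw [hO1def, hO2def, obs_mul] at h1
    simp only [observabilityMatrix, hz, pow_zero, Matrix.mul_one] at h1
    exact h1.symm
  have hA : A2 = T * A1 * T⁻¹ := by
    rw [hTinv]
    calc A2 = (L * O2) * A2 * (K2 * R) := by rw [hL, hR, Matrix.one_mul, Matrix.mul_one]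
      _ = L * (O2 * A2 * K2) * R := by simp only [Matrix.mul_assoc]
      _ = L * (O1 * A1 * K1) * R := by rw [hOAK]
      _ = (L * O1) * A1 * (K1 * R) := by simp only [Matrix.mul_assoc]
      _ = T * A1 * S := rfl
  exact ⟨T, hUnit, hA, hB, by rw [hTinv]; exact hC⟩
end

section
/- Input–output equivalence of a minimal time-delay system and any minimal delay-free realization with matching Markov parameters (Theorem 1): Let (A, B, C, τ) be a discrete-time time-delay linear system with state dimension k, input dimension dc, output dimension d, and Markov parameters h_j, and assume it is minimal, i.e., the controllability matrix [B, AB, …, A^{k−1}B] has rank k and the observability matrix stacking C, CA, …, CA^{k−1} has rank k. Let (A′, B′, C′) be a delay-free linear system with state dimension n that is minimal (its controllability matrix has rank n and its observability matrix has rank n) and whose Markov parameters satisfy C′ A′^{j−1} B′ = h_j for all j ≥ 1. Then for every initial state x0 ∈ ℝ^k, every buffer of past inputs b : {0, …, τ−1} → ℝ^{dc}, and every input sequence u : ℕ → ℝ^{dc}, there exists an initial state z0 ∈ ℝ^n such that the two output sequences coincide for all t ≥ 0: C x(t) = C′ z(t), where x(t+1) = A x(t) + B w(t) with x(0) = x0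 and w(t) = b(t) for t < τ, w(t) = u(t−τ) for t ≥ τ, and z(t+1) = A′ z(t) + B′ u(t) with z(0) = z0. -/
private lemma sum_ite_lt {M : Type*} [AddCommMonoid M] (a c : ℕ) (g : ℕ → M) :
    (∑ s ∈ Finset.range a, if s < c then g s else 0)
      = ∑ s ∈ Finset.range (min a c), g s := by
  rw [← Finset.sum_subset (Finset.range_subset_range.2 (min_le_left a c))
    (fun s hs hns => by
      rw [if_neg]
      simp only [Finset.mem_range] at hs hns
      omega)]
  exact Finset.sum_congr rfl fun s hs => by
    rw [if_pos]; simp only [Finset.mem_range] at hs; omega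

private lemma sum_ite_le {M : Type*} [AddCommMonoid M] (a c : ℕ) (g : ℕ → M) :
    (∑ s ∈ Finset.range a, if c ≤ s then g s else 0)
      = ∑ s ∈ Finset.range (a - c), g (c + s) := by
  rcases le_or_gt a c with h | h
  · rw [Nat.sub_eq_zero_of_le h]
    simp only [Finset.range_zero, Finset.sum_empty]
    exact Finset.sum_eq_zero fun s hs => by
      rw [if_neg]; simp only [Finset.mem_range] at hs; omega
  · have hfilter : (Finset.range a).filter (fun s => c ≤ s) = Finset.Ico c a := by
      ext s; simp [Finset.mem_filter, Finset.mem_range, Finset.mem_Ico, and_comm]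
    rw [← Finset.sum_filter, hfilter, Finset.sum_Ico_eq_sum_range]

private lemma mulVec_sum' {p q : ℕ} {ι : Type*} (s : Finset ι)
    (M : Matrix (Fin p) (Fin q) ℝ) (f : ι → Fin q → ℝ) :
    M.mulVec (∑ i ∈ s, f i) = ∑ i ∈ s, M.mulVec (f i) := by
  exact map_sum M.mulVecLin f s

private lemma state_closed_form {p q : ℕ} (A : Matrix (Fin p) (Fin p) ℝ)
    (B : Matrix (Fin p) (Fin q) ℝ) (w : ℕ → Fin q → ℝ) (x : ℕ → Fin p → ℝ)
    (hstep : ∀ t, x (t + 1) = A.mulVec (x t) + B.mulVec (w t)) :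
    ∀ t, x t = (A ^ t).mulVec (x 0)
      + ∑ s ∈ Finset.range t, ((A ^ (t - 1 - s)) * B).mulVec (w s) := by
  intro t
  induction t with
  | zero => simp
  | succ t ih =>
    rw [hstep t, ih]
    rw [Finset.sum_range_succ]
    have h0 : t + 1 - 1 - t = 0 := by omega
    rw [h0, pow_zero, Matrix.one_mul]
    rw [Matrix.mulVec_add]
    rw [add_assoc]
    congr 1
    · rw [Matrix.mulVec_mulVec, ← pow_succ']
    · congr 1
      rw [mulVec_sum']
      apply Finset.sum_congr rfl
      intro s hs
      simp only [Finset.mem_range] at hs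
      rw [Matrix.mulVec_mulVec, ← Matrix.mul_assoc, ← pow_succ']
      have he : t - 1 - s + 1 = t + 1 - 1 - s := by omega
      rw [he]

/-- Theorem 1: a minimal time-delay system and any minimal delay-free realization with
matching Markov parameters are input–output equivalent: for every initial state, buffer
of past inputs, and input sequence, there is an initial state of the delay-free
realization producing the same output sequence. -/
theorem minimal_delay_free_io_equivalence
    (k dc d n : ℕ) (τ : ℕ)
    (A : Matrix (Fin k) (Fin k) ℝ)
    (B : Matrix (Fin k) (Fin dc) ℝ)
    (C : Matrix (Fin d) (Fin k) ℝ)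
    (hctrb : (controllabilityMatrix k dc A B).rank = k)
    (hobsv : (observabilityMatrix k d A C).rank = k)
    (A' : Matrix (Fin n) (Fin n) ℝ)
    (B' : Matrix (Fin n) (Fin dc) ℝ)
    (C' : Matrix (Fin d) (Fin n) ℝ)
    (hctrb' : (controllabilityMatrix n dc A' B').rank = n)
    (hobsv' : (observabilityMatrix n d A' C').rank = n)
    (hmarkov : ∀ j : ℕ, 1 ≤ j →
      C' * A' ^ (j - 1) * B' =
        (if j ≤ τ then 0 else C * A ^ (j - τ - 1) * B)) :
    ∀ (x0 : Fin k → ℝ) (b : Fin τ → Fin dc → ℝ) (u : ℕ → Fin dc → ℝ)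
      (w : ℕ → Fin dc → ℝ)
      (_ : ∀ t : ℕ, w t = if ht : t < τ then b ⟨t, ht⟩ else u (t - τ))
      (x : ℕ → Fin k → ℝ)
      (_ : x 0 = x0)
      (_ : ∀ t : ℕ, x (t + 1) = A.mulVec (x t) + B.mulVec (w t)),
      ∃ z0 : Fin n → ℝ,
        ∀ (z : ℕ → Fin n → ℝ)
          (_ : z 0 = z0)
          (_ : ∀ t : ℕ, z (t + 1) = A'.mulVec (z t) + B'.mulVec (u t)),
          ∀ t : ℕ, C.mulVec (x t) = C'.mulVec (z t) := by
  intro x0 b u w hw x hx0 hxstep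
  -- Markov parameters beyond the delay
  have hm : ∀ e : ℕ, C' * A' ^ (e + τ) * B' = C * A ^ e * B := by
    intro e
    have h := hmarkov (e + τ + 1) (by omega)
    have h1 : e + τ + 1 - 1 = e + τ := by omega
    have h2 : e + τ + 1 - τ - 1 = e := by omega
    rw [h1, h2, if_neg (by omega)] at h
    exact h
  -- x0 is in the range of the controllability matrix
  set K := controllabilityMatrix k dc A B with hK
  have hsurj : Function.Surjective K.mulVecLin := by
    rw [← LinearMap.range_eq_top]
    apply Submodule.eq_top_of_finrank_eq
    rw [← Matrix.rank, hctrb]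
    simp
  obtain ⟨v, hv⟩ := hsurj x0
  -- shifted controllability-style matrix for the primed system
  set N : Matrix (Fin n) (Fin k × Fin dc) ℝ :=
    fun i q => (A' ^ ((q.1 : ℕ) + τ) * B') i q.2 with hN
  refine ⟨N.mulVec v + ∑ s ∈ Finset.range τ, (A' ^ (τ - 1 - s) * B').mulVec (w s),
    ?_⟩
  intro z hz0 hzstep t
  have hxcf := state_closed_form A B w x hxstep t
  have hzcf := state_closed_form A' B' u z hzstep t
  rw [hxcf, hzcf, hx0, hz0]
  simp only [Matrix.mulVec_add, mulVec_sum', Matrix.mulVec_mulVec, ← Matrix.mul_assoc]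
  -- key: (C' * A'^t) * N acts like (C * A^t) * K
  have hkey : (C' * A' ^ t) * N = (C * A ^ t) * K := by
    apply Matrix.ext
    intro i q
    rw [Matrix.mul_apply, Matrix.mul_apply]
    have l1 : ∀ j, N j q = (A' ^ ((q.1 : ℕ) + τ) * B') j q.2 := fun _ => rfl
    have l2 : ∀ j, K j q = (A ^ (q.1 : ℕ) * B) j q.2 := fun _ => rfl
    simp only [l1, l2]
    have e1 : (∑ j, (C' * A' ^ t) i j * (A' ^ ((q.1 : ℕ) + τ) * B') j q.2)
        = ((C' * A' ^ t) * (A' ^ ((q.1 : ℕ) + τ) * B')) i q.2 := by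
      rw [Matrix.mul_apply]
    have e2 : (∑ j, (C * A ^ t) i j * (A ^ (q.1 : ℕ) * B) j q.2)
        = ((C * A ^ t) * (A ^ (q.1 : ℕ) * B)) i q.2 := by
      rw [Matrix.mul_apply]
    rw [e1, e2]
    have e3 : (C' * A' ^ t) * (A' ^ ((q.1 : ℕ) + τ) * B')
        = C' * A' ^ (t + (q.1 : ℕ) + τ) * B' := by
      rw [show t + (q.1 : ℕ) + τ = t + ((q.1 : ℕ) + τ) by omega]
      simp only [pow_add, Matrix.mul_assoc]
    have e4 : (C * A ^ t) * (A ^ (q.1 : ℕ) * B) = C * A ^ (t + (q.1 : ℕ)) * B := by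
      simp only [pow_add, Matrix.mul_assoc]
    rw [e3, e4, hm (t + (q.1 : ℕ))]
  have hx0part : ((C * A ^ t) * K).mulVec v = (C * A ^ t).mulVec x0 := by
    rw [← hv]
    rw [Matrix.mulVecLin_apply, ← Matrix.mulVec_mulVec]
  rw [hkey, hx0part, add_assoc]
  congr 1
  -- remaining: the input/buffer sums agree
  -- buffer part on the z side
  have hbuf : ∀ s ∈ Finset.range τ,
      (C' * A' ^ t * A' ^ (τ - 1 - s) * B').mulVec (w s)
        = if s < t then (C * A ^ (t - 1 - s) * B).mulVec (w s) else 0 := by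
    intro s hs
    simp only [Finset.mem_range] at hs
    have e3 : C' * A' ^ t * A' ^ (τ - 1 - s) * B'
        = C' * A' ^ (t + (τ - 1 - s)) * B' := by
      simp only [pow_add, Matrix.mul_assoc]
    rw [e3]
    by_cases hst : s < t
    · rw [if_pos hst]
      have : t + (τ - 1 - s) = (t - 1 - s) + τ := by omega
      rw [this, hm]
    · rw [if_neg hst]
      have h := hmarkov (t + (τ - 1 - s) + 1) (by omega)
      have h1 : t + (τ - 1 - s) + 1 - 1 = t + (τ - 1 - s) := by omega
      rw [h1, if_pos (by omega)] at h
      rw [h, Matrix.zero_mulVec]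
  -- input part on the z side
  have hinp : ∀ s ∈ Finset.range t,
      (C' * A' ^ (t - 1 - s) * B').mulVec (u s)
        = if s < t - τ then (C * A ^ (t - τ - 1 - s) * B).mulVec (u s) else 0 := by
    intro s hs
    simp only [Finset.mem_range] at hs
    have h := hmarkov (t - s) (by omega)
    have h1 : t - s - 1 = t - 1 - s := by omega
    rw [h1] at h
    by_cases hst : s < t - τ
    · rw [if_pos hst, h, if_neg (by omega),
        show t - s - τ - 1 = t - τ - 1 - s from by omega]
    · rw [if_neg hst, h, if_pos (by omega), Matrix.zero_mulVec]
  rw [Finset.sum_congr rfl hbuf, Finset.sum_congr rfl hinp]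
  -- now both z-side sums are explicit; compare with the x-side sum
  have hwsplit : ∀ s ∈ Finset.range t,
      (C * A ^ (t - 1 - s) * B).mulVec (w s)
        = (if s < τ then (C * A ^ (t - 1 - s) * B).mulVec (w s) else 0)
          + (if τ ≤ s then (C * A ^ (t - 1 - s) * B).mulVec (u (s - τ)) else 0) := by
    intro s _
    by_cases hsτ : s < τ
    · rw [if_pos hsτ, if_neg (by omega), add_zero]
    · rw [if_neg hsτ, if_pos (by omega), zero_add]
      rw [hw s]
      rw [dif_neg hsτ]
  rw [Finset.sum_congr rfl hwsplit, Finset.sum_add_distrib]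
  congr 1
  · -- buffer sums
    rw [sum_ite_lt t τ (fun s => (C * A ^ (t - 1 - s) * B).mulVec (w s))]
    have : (∑ s ∈ Finset.range τ,
        if s < t then (C * A ^ (t - 1 - s) * B).mulVec (w s) else 0)
        = ∑ s ∈ Finset.range (min τ t), (C * A ^ (t - 1 - s) * B).mulVec (w s) :=
      sum_ite_lt τ t (fun s => (C * A ^ (t - 1 - s) * B).mulVec (w s))
    rw [this, min_comm]
  · -- input sums
    rw [sum_ite_le t τ (fun s => (C * A ^ (t - 1 - s) * B).mulVec (u (s - τ)))]
    have hcond : ∀ s ∈ Finset.range t,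
        (if s < t - τ then (C * A ^ (t - τ - 1 - s) * B).mulVec (u s) else 0)
          = (if s < t - τ then ((fun s => (C * A ^ (t - τ - 1 - s) * B).mulVec (u s)) s) else 0) :=
      fun s _ => rfl
    rw [sum_ite_lt t (t - τ) (fun s => (C * A ^ (t - τ - 1 - s) * B).mulVec (u s))]
    have hmin : min t (t - τ) = t - τ := by omega
    rw [hmin]
    apply Finset.sum_congr rfl
    intro s hs
    simp only [Finset.mem_range] at hs
    have e1 : t - 1 - (τ + s) = t - τ - 1 - s := by omega
    have e2 : τ + s - τ = s := by omega
    rw [e1, e2]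
end

section
/- Exact recovery of the transition matrix in the Ho–Kalman algorithm: Let (A, B, C) be a delay-free linear system with state dimension n, input dimension m, output dimension p, with Markov parameters g_ℓ = C A^{ℓ−1} B, and fix a depth s ≥ 1. Let H⁺ ∈ ℝ^{ps×ms} be the shifted block Hankel matrix with (i, j) block g_{i+j}, let O_s be the depth-s observability matrix and Q_s the depth-s controllability matrix. If O⁺ ∈ ℝ^{n×ps} is a left inverse of O_s (i.e., O⁺ O_s = I_n) and Q⁺ ∈ ℝ^{ms×n} is a right inverse of Q_s (i.e., Q_s Q⁺ = I_n), then O⁺ H⁺ Q⁺ = A. -/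
/-- The depth-`s` observability matrix stacking `C A^(i-1)` for `i = 1, …, s`. -/
def obsMat (n p s : ℕ) (A : Matrix (Fin n) (Fin n) ℝ)
    (C : Matrix (Fin p) (Fin n) ℝ) : Matrix (Fin s × Fin p) (Fin n) ℝ :=
  fun q j => (C * A ^ (q.1 : ℕ)) q.2 j

/-- The depth-`s` controllability matrix with blocks `A^(j-1) B` for `j = 1, …, s`. -/
def ctrMat (n m s : ℕ) (A : Matrix (Fin n) (Fin n) ℝ)
    (B : Matrix (Fin n) (Fin m) ℝ) : Matrix (Fin n) (Fin s × Fin m) ℝ :=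
  fun i q => (A ^ (q.1 : ℕ) * B) i q.2

/-- Exact recovery of the transition matrix in the Ho–Kalman algorithm: if `O⁺` is a
left inverse of the depth-`s` observability matrix and `Q⁺` is a right inverse of the
depth-`s` controllability matrix, then `O⁺ H⁺ Q⁺ = A`, where `H⁺` is the shifted block
Hankel matrix with `(i,j)` block `g_(i+j)`. -/
theorem ho_kalman_recovers_A
    (n m p s : ℕ) (hs : 1 ≤ s)
    (A : Matrix (Fin n) (Fin n) ℝ)
    (B : Matrix (Fin n) (Fin m) ℝ)
    (C : Matrix (Fin p) (Fin n) ℝ)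
    (Hplus : Matrix (Fin s × Fin p) (Fin s × Fin m) ℝ)
    (hH : ∀ (i : Fin s) (l : Fin p) (j : Fin s) (l' : Fin m),
      Hplus (i, l) (j, l') = (C * A ^ ((i : ℕ) + (j : ℕ) + 1) * B) l l')
    (Oplus : Matrix (Fin n) (Fin s × Fin p) ℝ)
    (hO : Oplus * obsMat n p s A C = 1)
    (Qplus : Matrix (Fin s × Fin m) (Fin n) ℝ)
    (hQ : ctrMat n m s A B * Qplus = 1) :
    Oplus * Hplus * Qplus = A := by
  have key : Hplus = obsMat n p s A C * (A * ctrMat n m s A B) := by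
    ext ⟨i, l⟩ ⟨j, l'⟩
    rw [hH]
    have hpow : C * A ^ ((i : ℕ) + (j : ℕ) + 1) * B
        = (C * A ^ (i : ℕ)) * (A * (A ^ (j : ℕ) * B)) := by
      have : ((i : ℕ) + (j : ℕ) + 1) = (i : ℕ) + (1 + (j : ℕ)) := by ring
      rw [this, pow_add, pow_add, pow_one]
      simp [Matrix.mul_assoc]
    rw [hpow]
    simp [obsMat, ctrMat, Matrix.mul_apply, Finset.mul_sum, Finset.sum_mul]
  rw [key, ← Matrix.mul_assoc, ← Matrix.mul_assoc, hO, Matrix.one_mul,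
    Matrix.mul_assoc, hQ, Matrix.mul_one]
end
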